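/- Let ω ∈ ℂ with Re ω ≠ 0 and p ≥ 1. If r : ℝ → ℂ is p-almost periodic (r ∈ AP(p)), then G_ω[r] ∈ AP(p) ∩ AAP; if r ∈ AP_0(p), then G_ω[r] ∈ AP_0(p) ∩ AAP_0. -/

import Mathlib

/-!
The kernel satisfies `‖g_ω(t,s)‖ ≤ e^{-a|t-s|}` with `a = |Re ω|` and depends only on `t - s`.
Hence `G_ω` commutes with translations and is bounded by `2/a` in the sup norm, so it maps
uniformly convergent sequences of translates to uniformly convergent ones and preserves `AP`.
For the `L^p` part, Hölder's inequality against the kernel gives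
`‖G_ω g(t)‖^p ≤ (2/a)^{p-1} (‖g‖^p ⋆ e^{-a|·|})(t)`, which reduces integrability and decay of
`G_ω g` to the convolution of the bounded function `‖g‖^p`, integrable on a half-line, with
`e^{-a|·|}`: after splitting at a point `B`, the mass left of `B` is damped by the exponential
and the mass right of `B` is a small tail once `B` is large.
-/

open MeasureTheory Filter Topology
open scoped ENNReal NNReal

noncomputable section

/-- Bochner-almost periodic function `ℝ → ℂ`. -/
def AP (f : ℝ → ℂ) : Prop :=
  Continuous f ∧ ∀ b : ℕ → ℝ, ∃ φ : ℕ → ℕ, StrictMono φ ∧ ∃ g : ℝ → ℂ,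
    TendstoUniformly (fun m t => f (t + b (φ m))) g atTop

/-- Bounded continuous. -/
def BCb (f : ℝ → ℂ) : Prop := Continuous f ∧ ∃ C : ℝ, ∀ t, ‖f t‖ ≤ C

def BC0 (f : ℝ → ℂ) : Prop := BCb f ∧ Tendsto f atTop (nhds 0)

def C00 (f : ℝ → ℂ) : Prop := BC0 f ∧ Tendsto f atBot (nhds 0)

def Lp0 (p : ℝ) (f : ℝ → ℂ) : Prop :=
  (∃ C : ℝ, ∀ t ≤ (0:ℝ), ‖f t‖ ≤ C) ∧ (∫⁻ t in Set.Ioi (0:ℝ), (‖f t‖₊ : ℝ≥0∞) ^ p) < ⊤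

def LpR (p : ℝ) (f : ℝ → ℂ) : Prop := (∫⁻ t : ℝ, (‖f t‖₊ : ℝ≥0∞) ^ p) < ⊤

def AAP (f : ℝ → ℂ) : Prop :=
  BCb f ∧ ∃ φ g : ℝ → ℂ, (∀ t, f t = φ t + g t) ∧ AP φ ∧ Tendsto g atTop (nhds 0)

def AAP0 (f : ℝ → ℂ) : Prop :=
  BCb f ∧ ∃ φ g : ℝ → ℂ, (∀ t, f t = φ t + g t) ∧ AP φ ∧
    Tendsto g atTop (nhds 0) ∧ Tendsto g atBot (nhds 0)

def APp (p : ℝ) (f : ℝ → ℂ) : Prop :=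
  BCb f ∧ ∃ φ g : ℝ → ℂ, (∀ t, f t = φ t + g t) ∧ AP φ ∧ Lp0 p g

def APp0 (p : ℝ) (f : ℝ → ℂ) : Prop :=
  BCb f ∧ ∃ φ g : ℝ → ℂ, (∀ t, f t = φ t + g t) ∧ AP φ ∧ LpR p g

/-- The Green kernel `g_ω`. -/
def gker (ω : ℂ) (t s : ℝ) : ℂ :=
  if Real.sign ω.re * (t - s) < 0
  then ((-Real.sign ω.re : ℝ) : ℂ) * Complex.exp (ω * ((t - s : ℝ) : ℂ)) else 0

/-- The Green operator `G_ω`. -/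
def Gop (ω : ℂ) (f : ℝ → ℂ) (t : ℝ) : ℂ := ∫ s : ℝ, gker ω t s * f s

/-- The absolute Green operator `I_ω`, with values in `[0,∞]`. -/
def Iop (ω : ℂ) (f : ℝ → ℂ) (t : ℝ) : ℝ≥0∞ := ∫⁻ s : ℝ, (‖gker ω t s * f s‖₊ : ℝ≥0∞)

def Gam {m : ℕ} (γ : Fin m → ℂ) (j : Fin m) : ℂ := ∏ k ∈ Finset.univ.erase j, (γ j - γ k)

/-- The Green operator for the family γ. -/
def GreenOp {m : ℕ} (γ : Fin m → ℂ) (f : ℝ → ℂ) (t : ℝ) : ℂ :=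
  ∑ j, (Gam γ j)⁻¹ * Gop (γ j) f t

def Dpoly {m : ℕ} (γ : Fin m → ℂ) : Polynomial ℂ := ∏ j, (Polynomial.X - Polynomial.C (γ j))

/-- The differential operator with characteristic polynomial `∏ (x - γ j)`. -/
def Dop {m : ℕ} (γ : Fin m → ℂ) (z : ℝ → ℂ) (t : ℝ) : ℂ :=
  ∑ k ∈ Finset.range (m + 1), (Dpoly γ).coeff k * iteratedDeriv k z t

def APm (m : ℕ) (F : ℝ → (Fin m → ℂ) → ℂ) : Prop :=
  Continuous (fun p : ℝ × (Fin m → ℂ) => F p.1 p.2) ∧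
  ∀ b : ℕ → ℝ, ∃ φ : ℕ → ℕ, StrictMono φ ∧ ∃ G : ℝ → (Fin m → ℂ) → ℂ,
    ∀ K : Set (Fin m → ℂ), IsCompact K →
      TendstoUniformlyOn (fun k (p : ℝ × (Fin m → ℂ)) => F (p.1 + b (φ k)) p.2)
        (fun p => G p.1 p.2) atTop (Set.univ ×ˢ K)

def DecayTop (m : ℕ) (h : ℝ → (Fin m → ℂ) → ℂ) : Prop :=
  ∀ K : Set (Fin m → ℂ), IsCompact K →
    TendstoUniformlyOn (fun t x => h t x) 0 atTop K

def DecayBot (m : ℕ) (h : ℝ → (Fin m → ℂ) → ℂ) : Prop :=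
  ∀ K : Set (Fin m → ℂ), IsCompact K →
    TendstoUniformlyOn (fun t x => h t x) 0 atBot K

def AAPm (m : ℕ) (F : ℝ → (Fin m → ℂ) → ℂ) : Prop :=
  Continuous (fun p : ℝ × (Fin m → ℂ) => F p.1 p.2) ∧ (∃ C : ℝ, ∀ t x, ‖F t x‖ ≤ C) ∧
  ∃ Φ h : ℝ → (Fin m → ℂ) → ℂ, (∀ t x, F t x = Φ t x + h t x) ∧ APm m Φ ∧ DecayTop m h

def AAP0m (m : ℕ) (F : ℝ → (Fin m → ℂ) → ℂ) : Prop :=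
  Continuous (fun p : ℝ × (Fin m → ℂ) => F p.1 p.2) ∧ (∃ C : ℝ, ∀ t x, ‖F t x‖ ≤ C) ∧
  ∃ Φ h : ℝ → (Fin m → ℂ) → ℂ, (∀ t x, F t x = Φ t x + h t x) ∧ APm m Φ ∧
    DecayTop m h ∧ DecayBot m h

/-- Complete Bell polynomials. -/
def Bell : ℕ → (ℕ → ℂ) → ℂ
  | 0, _ => 1
  | (i+1), x => ∑ j ∈ Finset.range (i+1), (Nat.choose i j : ℂ) * Bell (i - j) x * x (j+1)
decreasing_by exact Nat.lt_succ_of_le (Nat.sub_le i j)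

/-- `f_i(x_1,…,x_i) = B_{i+1}(x_1,…,x_i,0)`. -/
def fBell (i : ℕ) (x : ℕ → ℂ) : ℂ := Bell (i+1) (fun k => if k = i+1 then 0 else x k)

def Pa (n : ℕ) (a : ℕ → ℂ) : Polynomial ℂ :=
  Polynomial.X ^ n + ∑ i ∈ Finset.range n, Polynomial.C (a i) * Polynomial.X ^ i

def Prl (n : ℕ) (r : ℕ → ℝ → ℂ) (lam : ℂ) (t : ℝ) : ℂ :=
  ∑ k ∈ Finset.range n, lam ^ k * r k t

/-- `(d^k/dλ^k) P(r(t);λ)`. -/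
def PrlD (n k : ℕ) (r : ℕ → ℝ → ℂ) (lam : ℂ) (t : ℝ) : ℂ :=
  (Nat.factorial k : ℂ) * ∑ i ∈ Finset.range n, (Nat.choose i k : ℂ) * lam ^ (i - k) * r i t

def DopP (n : ℕ) (a : ℕ → ℂ) (lam : ℂ) (z : ℝ → ℂ) (t : ℝ) : ℂ :=
  ∑ j ∈ Finset.Icc 1 n, ((Nat.factorial j : ℂ))⁻¹ *
    Polynomial.eval lam (Polynomial.derivative^[j] (Pa n a)) * iteratedDeriv (j-1) z t

def Lterm (n : ℕ) (r : ℕ → ℝ → ℂ) (lam : ℂ) (z : ℝ → ℂ) (t : ℝ) : ℂ :=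
  ∑ k ∈ Finset.Icc 1 (n-1), ((Nat.factorial k : ℂ))⁻¹ * PrlD n k r lam t * iteratedDeriv (k-1) z t

def Fterm (n : ℕ) (a : ℕ → ℂ) (r : ℕ → ℝ → ℂ) (lam : ℂ) (z : ℝ → ℂ) (t : ℝ) : ℂ :=
  ∑ i ∈ Finset.Icc 2 n, ∑ j ∈ Finset.range (n - i + 1),
    (Nat.choose (i+j) j : ℂ) * (a (i+j) + r (i+j) t) * lam ^ j *
      fBell (i-1) (fun k => iteratedDeriv (k-1) z t)

def aT (n : ℕ) {m : ℕ} (γ : Fin m → ℂ) (j : Fin m) : ℝ :=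
  ∑ i ∈ Finset.range (n-1), ‖γ j‖ ^ i

def Lconst (n : ℕ) (γ : Fin (n-1) → ℂ) (r : ℕ → ℝ → ℂ) (lam : ℂ) (β : ℝ) : ℝ≥0∞ :=
  ∑ j, ∑ k ∈ Finset.Icc 1 (n-1),
    ENNReal.ofReal (aT n γ j / (‖Gam γ j‖ * (Nat.factorial k))) *
      ⨆ t : ℝ, Iop (((γ j).re - Real.sign (γ j).re * β : ℝ) : ℂ) (PrlD n k r lam) t

def Qconst (n : ℕ) (γ : Fin (n-1) → ℂ) (a : ℕ → ℂ) (r : ℕ → ℝ → ℂ) (lam : ℂ) (β : ℝ) : ℝ≥0∞ :=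
  ∑ j, ∑ i ∈ Finset.Icc 2 n, ∑ k ∈ Finset.range (i-1),
    ENNReal.ofReal (aT n γ j / ‖Gam γ j‖ * (Nat.choose i k) * ‖lam‖ ^ k) *
      (ENNReal.ofReal (‖a i‖ / |(γ j).re - Real.sign (γ j).re * β|) +
        ⨆ t : ℝ, Iop (((γ j).re - Real.sign (γ j).re * β : ℝ) : ℂ) (r i) t)

def mConst (n : ℕ) (δ : ℝ) : ℝ :=
  sSup { q : ℝ | ∃ i ∈ Finset.Icc 1 (n-1), ∃ X Y : ℕ → ℂ,
    (∑ k ∈ Finset.Icc 1 i, ‖X k‖) ≤ δ ∧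
    (∑ k ∈ Finset.Icc 1 i, ‖Y k‖) ≤ δ ∧
    (∑ k ∈ Finset.Icc 1 i, ‖X k - Y k‖) ≠ 0 ∧
    q = ‖fBell i X - fBell i Y‖ / ∑ k ∈ Finset.Icc 1 i, ‖X k - Y k‖ }

open Set

def expKernel (a x : ℝ) : ℝ≥0∞ := ENNReal.ofReal (Real.exp (-a * |x|))

section expKernel

variable {a : ℝ}

@[fun_prop]
lemma measurable_expKernel (a : ℝ) : Measurable (expKernel a) := by
  unfold expKernel; fun_prop

lemma expKernel_le_one (ha : 0 ≤ a) (x : ℝ) : expKernel a x ≤ 1 := by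
  rw [expKernel, ENNReal.ofReal_le_one, Real.exp_le_one_iff, neg_mul, neg_nonpos]
  positivity

lemma expKernel_neg (a x : ℝ) : expKernel a (-x) = expKernel a x := by
  rw [expKernel, expKernel, abs_neg]

lemma expKernel_add {x y : ℝ} (hx : 0 ≤ x) (hy : 0 ≤ y) :
    expKernel a (x + y) = expKernel a x * expKernel a y := by
  rw [expKernel, expKernel, expKernel, ← ENNReal.ofReal_mul (Real.exp_nonneg _), ← Real.exp_add,
    abs_of_nonneg hx, abs_of_nonneg hy, abs_of_nonneg (add_nonneg hx hy), mul_add]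

lemma tendsto_expKernel_atTop (ha : 0 < a) : Tendsto (expKernel a) atTop (𝓝 0) := by
  unfold expKernel
  have : Tendsto (fun x : ℝ => -a * |x|) atTop atBot :=
    (tendsto_abs_atTop_atTop).const_mul_atTop_of_neg (neg_neg_of_pos ha)
  simpa using ENNReal.tendsto_ofReal (Real.tendsto_exp_atBot.comp this)

lemma integrable_exp_neg_mul_abs (ha : 0 < a) : Integrable fun x : ℝ => Real.exp (-a * |x|) := by
  rw [← integrableOn_univ, ← Iic_union_Ioi (a := (0 : ℝ))]
  refine ((integrableOn_exp_mul_Iic ha 0).congr_fun (fun x hx => ?_) measurableSet_Iic).union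
    ((integrableOn_exp_mul_Ioi (neg_neg_of_pos ha) 0).congr_fun (fun x hx => ?_) measurableSet_Ioi)
  · rw [abs_of_nonpos (mem_Iic.1 hx), mul_neg, neg_mul, neg_neg]
  · rw [abs_of_pos (mem_Ioi.1 hx)]

lemma lintegral_expKernel (ha : 0 < a) : ∫⁻ x, expKernel a x = ENNReal.ofReal (2 / a) := by
  unfold expKernel
  rw [← ofReal_integral_eq_lintegral_ofReal
    (integrable_exp_neg_mul_abs ha) (ae_of_all _ fun x => Real.exp_nonneg _),
    integral_comp_abs (f := fun x => Real.exp (-a * x)),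
    integral_exp_mul_Ioi (neg_neg_of_pos ha)]
  congr 1
  field_simp
  simp

end expKernel

section lconvolution

variable {G : Type*} [MeasurableSpace G] [AddGroup G] [MeasurableAdd₂ G] [MeasurableNeg G]
  {μ : Measure G} [μ.IsAddLeftInvariant] [SFinite μ] {f g : G → ℝ≥0∞}

lemma lintegral_lconvolution (hf : AEMeasurable f μ) (hg : AEMeasurable g μ) :
    ∫⁻ x, (f ⋆ₗ[μ] g) x ∂μ = (∫⁻ x, f x ∂μ) * ∫⁻ x, g x ∂μ := by
  simp only [lconvolution_def]
  rw [lintegral_lintegral_swap (by fun_prop), ← lintegral_mul_const'' _ hf]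
  refine lintegral_congr fun y => ?_
  rw [lintegral_add_left_eq_self (fun x => f y * g x) (-y), lintegral_const_mul'' _ hg]

end lconvolution

lemma rpow_lintegral_mul_le {α : Type*} [MeasurableSpace α] {μ : Measure α} {f k : α → ℝ≥0∞}
    (hf : AEMeasurable f μ) (hk : AEMeasurable k μ) {p : ℝ} (hp : 1 ≤ p) :
    (∫⁻ x, f x * k x ∂μ) ^ p ≤ (∫⁻ x, k x ∂μ) ^ (p - 1) * ∫⁻ x, f x ^ p * k x ∂μ := by
  have hp0 : 0 < p := by linarith
  have hq : 0 ≤ 1 - p⁻¹ := sub_nonneg.2 (inv_le_one_of_one_le₀ hp)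
  have holder : ∫⁻ x, k x ^ (1 - p⁻¹) * (f x ^ p * k x) ^ p⁻¹ ∂μ
      ≤ (∫⁻ x, k x ∂μ) ^ (1 - p⁻¹) * (∫⁻ x, f x ^ p * k x ∂μ) ^ p⁻¹ :=
    ENNReal.lintegral_mul_norm_pow_le hk ((hf.pow_const p).mul hk) hq (inv_nonneg.2 hp0.le)
      (sub_add_cancel 1 p⁻¹)
  have integrand : ∀ x, k x ^ (1 - p⁻¹) * (f x ^ p * k x) ^ p⁻¹ = f x * k x := fun x => by
    rw [ENNReal.mul_rpow_of_nonneg _ _ (inv_nonneg.2 hp0.le), ← ENNReal.rpow_mul,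
      mul_inv_cancel₀ hp0.ne', ENNReal.rpow_one, mul_left_comm, ← ENNReal.rpow_add_of_nonneg _ _ hq
      (inv_nonneg.2 hp0.le), sub_add_cancel, ENNReal.rpow_one, mul_comm]
  simp only [integrand] at holder
  calc (∫⁻ x, f x * k x ∂μ) ^ p
      ≤ ((∫⁻ x, k x ∂μ) ^ (1 - p⁻¹) * (∫⁻ x, f x ^ p * k x ∂μ) ^ p⁻¹) ^ p := by gcongr
    _ = (∫⁻ x, k x ∂μ) ^ (p - 1) * ∫⁻ x, f x ^ p * k x ∂μ := by
      rw [ENNReal.mul_rpow_of_nonneg _ _ hp0.le, ← ENNReal.rpow_mul, ← ENNReal.rpow_mul,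
        inv_mul_cancel₀ hp0.ne', ENNReal.rpow_one, sub_mul, one_mul, inv_mul_cancel₀ hp0.ne']

lemma rpow_lconvolution_le {f g : ℝ → ℝ≥0∞} (hf : AEMeasurable f) (hg : Measurable g) {p : ℝ}
    (hp : 1 ≤ p) (x : ℝ) :
    (f ⋆ₗ g) x ^ p ≤ (∫⁻ y, g y) ^ (p - 1) * ((fun y => f y ^ p) ⋆ₗ g) x := by
  have hshift : ∫⁻ y, g (-y + x) = ∫⁻ y, g y := by
    simp_rw [neg_add_eq_sub]; exact lintegral_sub_left_eq_self g x
  rw [lconvolution_def, lconvolution_def, ← hshift]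
  exact rpow_lintegral_mul_le hf (by fun_prop) hp

lemma tendsto_setLIntegral_Ioi_atTop {f : ℝ → ℝ≥0∞} (hf : AEMeasurable f)
    (hfin : ∫⁻ y in Ioi 0, f y ≠ ⊤) : Tendsto (fun B => ∫⁻ y in Ioi B, f y) atTop (𝓝 0) := by
  simp_rw [← lintegral_indicator measurableSet_Ioi]
  simpa using tendsto_lintegral_filter_of_dominated_convergence' ((Ioi 0).indicator f)
    (.of_forall fun B => hf.indicator measurableSet_Ioi)
    ((eventually_ge_atTop 0).mono fun B hB => ae_of_all _
      (indicator_le_indicator_of_subset (Ioi_subset_Ioi hB) fun _ => zero_le))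
    (by rwa [lintegral_indicator measurableSet_Ioi])
    (ae_of_all _ fun y => tendsto_const_nhds.congr' <| (eventually_ge_atTop y).mono
      fun B hB => (indicator_of_notMem (notMem_Ioi.2 hB) f).symm)

section expKernel_lconvolution

variable {a : ℝ} {f : ℝ → ℝ≥0∞} {C : ℝ≥0∞}

lemma lconvolution_expKernel_le_lintegral (ha : 0 ≤ a) (t : ℝ) :
    (f ⋆ₗ expKernel a) t ≤ ∫⁻ y, f y :=
  lintegral_mono fun _ => mul_le_of_le_one_right' (expKernel_le_one ha _)

lemma lconvolution_expKernel_le_mul (ha : 0 < a) (hC : ∀ y, f y ≤ C) (t : ℝ) :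
    (f ⋆ₗ expKernel a) t ≤ C * ENNReal.ofReal (2 / a) := by
  calc (f ⋆ₗ expKernel a) t ≤ ∫⁻ y, C * expKernel a (-y + t) :=
        lintegral_mono fun y => mul_le_mul_left (hC y) _
    _ = C * ENNReal.ofReal (2 / a) := by
      rw [lintegral_const_mul _ (by fun_prop), ← lintegral_expKernel ha]
      simp_rw [neg_add_eq_sub]
      rw [lintegral_sub_left_eq_self (expKernel a) t]

lemma lconvolution_expKernel_le (ha : 0 < a) (hC : ∀ y, f y ≤ C) {B t : ℝ}
    (hBt : B ≤ t) :
    (f ⋆ₗ expKernel a) t ≤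
      C * expKernel a (t - B) * ENNReal.ofReal (2 / a)
        + ((Ioi B).indicator f ⋆ₗ expKernel a) t := by
  have hfar : ∫⁻ y in Iic B, f y * expKernel a (-y + t)
      ≤ C * expKernel a (t - B) * ENNReal.ofReal (2 / a) := by
    calc ∫⁻ y in Iic B, f y * expKernel a (-y + t)
        ≤ ∫⁻ y in Iic B, C * expKernel a (t - B) * expKernel a (B - y) := by
          refine setLIntegral_mono' measurableSet_Iic fun y hy => ?_
          rw [mul_assoc, ← expKernel_add (sub_nonneg.2 hBt) (sub_nonneg.2 hy),
            sub_add_sub_cancel, neg_add_eq_sub]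
          exact mul_le_mul_left (hC y) _
      _ ≤ C * expKernel a (t - B) * ∫⁻ y, expKernel a (B - y) := by
          rw [lintegral_const_mul _ (by fun_prop)]
          exact mul_le_mul_right (setLIntegral_le_lintegral _ _) _
      _ = C * expKernel a (t - B) * ENNReal.ofReal (2 / a) := by
          rw [lintegral_sub_left_eq_self (expKernel a) B, lintegral_expKernel ha]
  have hnear : ∫⁻ y in Ioi B, f y * expKernel a (-y + t)
      = ((Ioi B).indicator f ⋆ₗ expKernel a) t := by
    rw [lconvolution_def, ← lintegral_indicator measurableSet_Ioi]
    simp_rw [indicator_mul_left]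
  rw [lconvolution_def, ← lintegral_add_compl _ measurableSet_Iic, compl_Iic, hnear]
  gcongr

lemma tendsto_lconvolution_expKernel_atTop (ha : 0 < a) (hf : AEMeasurable f)
    (hC : ∀ y, f y ≤ C) (hCtop : C ≠ ⊤) (hfin : ∫⁻ y in Ioi 0, f y ≠ ⊤) :
    Tendsto (f ⋆ₗ expKernel a) atTop (𝓝 0) := by
  refine ENNReal.tendsto_nhds_zero.2 fun ε hε => ?_
  have hε2 : 0 < ε / 2 := ENNReal.half_pos hε.ne'
  obtain ⟨B, hB⟩ :=
    (ENNReal.tendsto_nhds_zero.1 (tendsto_setLIntegral_Ioi_atTop hf hfin) _ hε2).exists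
  have hdamp :
      Tendsto (fun t => C * expKernel a (t - B) * ENNReal.ofReal (2 / a)) atTop (𝓝 0) := by
    have := (tendsto_expKernel_atTop ha).comp
      (tendsto_atTop_add_const_right atTop (-B) tendsto_id)
    simpa [← sub_eq_add_neg] using
      ENNReal.Tendsto.mul_const (ENNReal.Tendsto.const_mul this (.inr hCtop))
        (.inr ENNReal.ofReal_ne_top)
  filter_upwards [ENNReal.tendsto_nhds_zero.1 hdamp _ hε2, eventually_ge_atTop B] with t ht hBt
  calc (f ⋆ₗ expKernel a) t
      ≤ C * expKernel a (t - B) * ENNReal.ofReal (2 / a)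
          + ((Ioi B).indicator f ⋆ₗ expKernel a) t :=
        lconvolution_expKernel_le ha hC hBt
    _ ≤ ε / 2 + ε / 2 := by
        gcongr
        refine (lconvolution_expKernel_le_lintegral ha.le t).trans ?_
        rwa [lintegral_indicator measurableSet_Ioi]
    _ = ε := ENNReal.add_halves ε

lemma setLIntegral_Ioi_lconvolution_expKernel_lt_top (ha : 0 < a) (hf : AEMeasurable f)
    (hC : ∀ y, f y ≤ C) (hCtop : C ≠ ⊤) (hfin : ∫⁻ y in Ioi 0, f y ≠ ⊤) :
    ∫⁻ t in Ioi 0, (f ⋆ₗ expKernel a) t < ⊤ := by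
  calc ∫⁻ t in Ioi 0, (f ⋆ₗ expKernel a) t
      ≤ ∫⁻ t in Ioi 0, (C * expKernel a t * ENNReal.ofReal (2 / a)
          + ((Ioi 0).indicator f ⋆ₗ expKernel a) t) :=
        setLIntegral_mono' measurableSet_Ioi fun t ht => by
          simpa only [sub_zero] using lconvolution_expKernel_le ha hC ht.le
    _ ≤ (∫⁻ t, C * expKernel a t * ENNReal.ofReal (2 / a))
          + ∫⁻ t, ((Ioi 0).indicator f ⋆ₗ expKernel a) t :=
        (setLIntegral_le_lintegral _ _).trans_eq (lintegral_add_left (by fun_prop) _)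
    _ = C * ENNReal.ofReal (2 / a) * ENNReal.ofReal (2 / a)
          + (∫⁻ y in Ioi 0, f y) * ENNReal.ofReal (2 / a) := by
        rw [lintegral_lconvolution (hf.indicator measurableSet_Ioi) (by fun_prop),
          lintegral_indicator measurableSet_Ioi, lintegral_mul_const' _ _ ENNReal.ofReal_ne_top,
          lintegral_const_mul' _ _ hCtop, lintegral_expKernel ha]
    _ < ⊤ := by finiteness

lemma lconvolution_expKernel_neg (t : ℝ) :
    (f ⋆ₗ expKernel a) (-t) = ((fun y => f (-y)) ⋆ₗ expKernel a) t := by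
  simp only [lconvolution_def]
  rw [← lintegral_neg_eq_self]
  refine lintegral_congr fun y => ?_
  rw [← expKernel_neg a (-y + t)]
  ring_nf

lemma tendsto_lconvolution_expKernel_atBot (ha : 0 < a) (hf : AEMeasurable f)
    (hC : ∀ y, f y ≤ C) (hCtop : C ≠ ⊤) (hfin : ∫⁻ y, f y ≠ ⊤) :
    Tendsto (f ⋆ₗ expKernel a) atBot (𝓝 0) := by
  have hf_neg : AEMeasurable fun y => f (-y) :=
    hf.comp_quasiMeasurePreserving (Measure.measurePreserving_neg volume).quasiMeasurePreserving
  have hfin_neg : ∫⁻ y in Ioi 0, f (-y) ≠ ⊤ :=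
    ne_top_of_le_ne_top (by rwa [lintegral_neg_eq_self]) (setLIntegral_le_lintegral _ _)
  simpa [Function.comp_def, lconvolution_expKernel_neg] using
    (tendsto_lconvolution_expKernel_atTop ha hf_neg (fun _ => hC _) hCtop hfin_neg).comp
      tendsto_neg_atBot_atTop

end expKernel_lconvolution

lemma enorm_le_ofReal_of_norm_le {E : Type*} [SeminormedAddGroup E] {x : E} {C : ℝ}
    (h : ‖x‖ ≤ C) : ‖x‖ₑ ≤ ENNReal.ofReal C :=
  ofReal_norm x ▸ ENNReal.ofReal_le_ofReal h

section Green

variable {ω : ℂ} {f g : ℝ → ℂ}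

lemma norm_gker_le (ω : ℂ) (t s : ℝ) : ‖gker ω t s‖ ≤ Real.exp (-|ω.re| * |t - s|) := by
  unfold gker
  split_ifs with h
  · have hre : (ω * ((t - s : ℝ) : ℂ)).re = ω.re * (t - s) := by simp
    rw [norm_mul, Complex.norm_exp, hre, Complex.norm_real, norm_neg]
    rcases lt_trichotomy ω.re 0 with hneg | hzero | hpos
    · rw [Real.sign_of_neg hneg] at h ⊢
      rw [norm_neg, norm_one, one_mul, Real.exp_le_exp, abs_of_neg hneg,
        abs_of_pos (by linarith : 0 < t - s)]
      linarith
    · simp [hzero] at h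
    · rw [Real.sign_of_pos hpos] at h ⊢
      rw [norm_one, one_mul, Real.exp_le_exp, abs_of_pos hpos, abs_of_neg (by linarith : t - s < 0)]
      linarith
  · rw [norm_zero]
    positivity

lemma enorm_gker_le (ω : ℂ) (t s : ℝ) : ‖gker ω t s‖ₑ ≤ expKernel |ω.re| (t - s) := by
  rw [← ofReal_norm]
  exact ENNReal.ofReal_le_ofReal (norm_gker_le ω t s)

lemma measurable_gker (ω : ℂ) (t : ℝ) : Measurable (gker ω t) := by
  unfold gker
  exact Measurable.ite (measurableSet_lt (by fun_prop) measurable_const) (by fun_prop)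
    measurable_const

lemma lintegral_enorm_gker_mul_le (ω : ℂ) (f : ℝ → ℂ) (t : ℝ) :
    ∫⁻ s, ‖gker ω t s * f s‖ₑ ≤ ((fun s => ‖f s‖ₑ) ⋆ₗ expKernel |ω.re|) t :=
  lintegral_mono fun s => by
    rw [enorm_mul, mul_comm, neg_add_eq_sub]
    exact mul_le_mul_right (enorm_gker_le ω t s) _

lemma enorm_Gop_le (ω : ℂ) (f : ℝ → ℂ) (t : ℝ) :
    ‖Gop ω f t‖ₑ ≤ ((fun s => ‖f s‖ₑ) ⋆ₗ expKernel |ω.re|) t :=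
  (enorm_integral_le_lintegral_enorm _).trans (lintegral_enorm_gker_mul_le ω f t)

lemma norm_Gop_le (hω : ω.re ≠ 0) {C : ℝ} (hC : ∀ s, ‖f s‖ ≤ C) (t : ℝ) :
    ‖Gop ω f t‖ ≤ 2 / |ω.re| * C := by
  have hC0 : 0 ≤ C := (norm_nonneg _).trans (hC 0)
  have := (enorm_Gop_le ω f t).trans (lconvolution_expKernel_le_mul (abs_pos.2 hω)
    (fun s => enorm_le_ofReal_of_norm_le (hC s)) t)
  rwa [← ofReal_norm, ← ENNReal.ofReal_mul hC0, ENNReal.ofReal_le_ofReal_iff (by positivity),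
    mul_comm] at this

lemma BCb.integrable_gker_mul (hω : ω.re ≠ 0) (hf : BCb f) (t : ℝ) :
    Integrable fun s => gker ω t s * f s := by
  obtain ⟨hfc, C, hC⟩ := hf
  refine ⟨(measurable_gker ω t).aestronglyMeasurable.mul hfc.aestronglyMeasurable,
    hasFiniteIntegral_iff_enorm.2 ?_⟩
  calc ∫⁻ s, ‖gker ω t s * f s‖ₑ
      ≤ ENNReal.ofReal C * ENNReal.ofReal (2 / |ω.re|) :=
        (lintegral_enorm_gker_mul_le ω f t).trans (lconvolution_expKernel_le_mul (abs_pos.2 hω)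
          (fun s => enorm_le_ofReal_of_norm_le (hC s)) t)
    _ < ⊤ := by finiteness

lemma Gop_add (hω : ω.re ≠ 0) (hf : BCb f) (hg : BCb g) :
    Gop ω (f + g) = Gop ω f + Gop ω g := funext fun t => by
  simp only [Gop, Pi.add_apply, mul_add]
  exact integral_add (hf.integrable_gker_mul hω t) (hg.integrable_gker_mul hω t)

lemma Gop_sub (hω : ω.re ≠ 0) (hf : BCb f) (hg : BCb g) :
    Gop ω (f - g) = Gop ω f - Gop ω g := funext fun t => by
  simp only [Gop, Pi.sub_apply, mul_sub]
  exact integral_sub (hf.integrable_gker_mul hω t) (hg.integrable_gker_mul hω t)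

lemma Gop_comp_add_right (ω : ℂ) (f : ℝ → ℂ) (b t : ℝ) :
    Gop ω (fun s => f (s + b)) t = Gop ω f (t + b) := by
  rw [Gop, Gop, ← integral_add_right_eq_self (fun s => gker ω (t + b) s * f s) b]
  simp only [gker, add_sub_add_right_eq_sub]

lemma continuous_Gop (hω : ω.re ≠ 0) (hf : BCb f) : Continuous (Gop ω f) := by
  obtain ⟨hfc, C, hC⟩ := hf
  have hshift : Gop ω f = fun t => ∫ s, gker ω 0 s * f (s + t) :=
    funext fun t => by simpa [Gop] using (Gop_comp_add_right ω f t 0).symm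
  rw [hshift]
  refine continuous_of_dominated (bound := fun s => Real.exp (-|ω.re| * |0 - s|) * C)
    (fun t => (measurable_gker ω 0).aestronglyMeasurable.mul (by fun_prop))
    (fun t => ae_of_all _ fun s => ?_)
    (((integrable_exp_neg_mul_abs (abs_pos.2 hω)).comp_sub_left 0).mul_const C)
    (ae_of_all _ fun s => by fun_prop)
  rw [norm_mul]
  exact mul_le_mul (norm_gker_le ω 0 s) (hC _) (norm_nonneg _) (Real.exp_nonneg _)

end Green

section AlmostPeriodic

variable {ω : ℂ} {f g : ℝ → ℂ}

lemma BCb_Gop (hω : ω.re ≠ 0) (hf : BCb f) : BCb (Gop ω f) :=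
  let ⟨_, _, hC⟩ := hf
  ⟨continuous_Gop hω hf, _, norm_Gop_le hω hC⟩

lemma BCb.sub (hf : BCb f) (hg : BCb g) : BCb (f - g) := by
  obtain ⟨hfc, Cf, hCf⟩ := hf
  obtain ⟨hgc, Cg, hCg⟩ := hg
  exact ⟨hfc.sub hgc, Cf + Cg, fun t => (norm_sub_le _ _).trans (add_le_add (hCf t) (hCg t))⟩

lemma BCb.comp_add_right (hf : BCb f) (b : ℝ) : BCb fun t => f (t + b) := by
  obtain ⟨hfc, C, hC⟩ := hf
  exact ⟨by fun_prop, C, fun t => hC _⟩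

lemma BCb.of_tendstoUniformly {ι : Type*} {l : Filter ι} [l.NeBot] {F : ι → ℝ → ℂ} {C : ℝ}
    (hF : ∀ i, Continuous (F i)) (hC : ∀ i t, ‖F i t‖ ≤ C) (h : TendstoUniformly F f l) :
    BCb f :=
  ⟨h.continuous (.of_forall hF), C, fun t =>
    le_of_tendsto (h.tendsto_at t).norm (.of_forall fun i => hC i t)⟩

lemma AP.bcb (hf : AP f) : BCb f := by
  refine ⟨hf.1, ?_⟩
  by_contra! hunbdd
  choose b hb using fun n : ℕ => hunbdd n
  obtain ⟨φ, hφ, g, hg⟩ := hf.2 b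
  have hconv : Tendsto (fun m => ‖f (0 + b (φ m))‖) atTop (𝓝 ‖g 0‖) := (hg.tendsto_at 0).norm
  refine not_tendsto_atTop_of_tendsto_nhds hconv (tendsto_atTop_mono (fun m => ?_)
    (tendsto_natCast_atTop_atTop.comp hφ.tendsto_atTop))
  simpa using (hb (φ m)).le

lemma tendstoUniformly_Gop (hω : ω.re ≠ 0) {ι : Type*} {l : Filter ι} {F : ι → ℝ → ℂ}
    (hF : ∀ i, BCb (F i)) (hf : BCb f) (h : TendstoUniformly F f l) :
    TendstoUniformly (fun i => Gop ω (F i)) (Gop ω f) l := by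
  have ha : 0 < |ω.re| := abs_pos.2 hω
  rw [Metric.tendstoUniformly_iff] at h ⊢
  intro ε hε
  filter_upwards [h (|ω.re| * ε / 4) (by positivity)] with i hi t
  rw [dist_eq_norm, ← Pi.sub_apply (Gop ω f), ← Gop_sub hω hf (hF i)]
  calc ‖Gop ω (f - F i) t‖ ≤ 2 / |ω.re| * (|ω.re| * ε / 4) :=
        norm_Gop_le hω (fun s => (dist_eq_norm (f s) (F i s)) ▸ (hi s).le) t
    _ < ε := by field_simp; linarith

lemma AP_Gop (hω : ω.re ≠ 0) (hf : AP f) : AP (Gop ω f) := by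
  have hfb := hf.bcb
  obtain ⟨-, C, hC⟩ := hf.bcb
  refine ⟨continuous_Gop hω hfb, fun b => ?_⟩
  obtain ⟨φ, hφ, g, hg⟩ := hf.2 b
  have hF : ∀ m, BCb fun t => f (t + b (φ m)) := fun m => hfb.comp_add_right _
  have hgb : BCb g := .of_tendstoUniformly (fun m => (hF m).1) (fun m t => hC _) hg
  refine ⟨φ, hφ, Gop ω g, ?_⟩
  simpa only [← Gop_comp_add_right] using tendstoUniformly_Gop hω hF hgb hg

end AlmostPeriodic

section Integrability

variable {ω : ℂ} {g : ℝ → ℂ} {p : ℝ}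

lemma enorm_Gop_rpow_le (hω : ω.re ≠ 0) (hg : AEStronglyMeasurable g) (hp : 1 ≤ p) (t : ℝ) :
    ‖Gop ω g t‖ₑ ^ p ≤
      ENNReal.ofReal (2 / |ω.re|) ^ (p - 1) * ((fun s => ‖g s‖ₑ ^ p) ⋆ₗ expKernel |ω.re|) t := by
  rw [← lintegral_expKernel (abs_pos.2 hω)]
  calc ‖Gop ω g t‖ₑ ^ p ≤ ((fun s => ‖g s‖ₑ) ⋆ₗ expKernel |ω.re|) t ^ p := by
        gcongr; exact enorm_Gop_le ω g t
    _ ≤ _ := rpow_lconvolution_le hg.enorm (measurable_expKernel _) hp t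

lemma enorm_rpow_le_of_norm_le {C : ℝ} (hC : ∀ s, ‖g s‖ ≤ C) (hp : 0 ≤ p) (s : ℝ) :
    ‖g s‖ₑ ^ p ≤ ENNReal.ofReal C ^ p :=
  ENNReal.rpow_le_rpow (enorm_le_ofReal_of_norm_le (hC s)) hp

lemma tendsto_Gop_of_tendsto_lconvolution (hω : ω.re ≠ 0) (hg : AEStronglyMeasurable g)
    (hp : 1 ≤ p) {l : Filter ℝ}
    (h : Tendsto ((fun s => ‖g s‖ₑ ^ p) ⋆ₗ expKernel |ω.re|) l (𝓝 0)) :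
    Tendsto (Gop ω g) l (𝓝 0) := by
  have hp0 : 0 < p := by linarith
  have hpow : Tendsto (fun t => ‖Gop ω g t‖ₑ ^ p) l (𝓝 0) := by
    refine tendsto_of_tendsto_of_tendsto_of_le_of_le tendsto_const_nhds ?_ (fun _ => zero_le)
      (enorm_Gop_rpow_le hω hg hp)
    simpa using ENNReal.Tendsto.const_mul h (.inr (by finiteness))
  have := ((ENNReal.continuous_rpow_const (y := p⁻¹)).tendsto 0).comp hpow
  simp only [Function.comp_def, ← ENNReal.rpow_mul, mul_inv_cancel₀ hp0.ne', ENNReal.rpow_one,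
    ENNReal.zero_rpow_of_pos (inv_pos.2 hp0)] at this
  exact tendsto_zero_iff_enorm_tendsto_zero.2 this

lemma Lp0_Gop (hω : ω.re ≠ 0) (hp : 1 ≤ p) (hg : BCb g) (hg0 : Lp0 p g) : Lp0 p (Gop ω g) := by
  obtain ⟨hgc, C, hC⟩ := hg
  refine ⟨⟨_, fun t _ => norm_Gop_le hω hC t⟩, ?_⟩
  calc ∫⁻ t in Ioi 0, ‖Gop ω g t‖ₑ ^ p
      ≤ ∫⁻ t in Ioi 0, ENNReal.ofReal (2 / |ω.re|) ^ (p - 1) *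
          ((fun s => ‖g s‖ₑ ^ p) ⋆ₗ expKernel |ω.re|) t :=
        lintegral_mono fun t => enorm_Gop_rpow_le hω hgc.aestronglyMeasurable hp t
    _ = ENNReal.ofReal (2 / |ω.re|) ^ (p - 1) *
          ∫⁻ t in Ioi 0, ((fun s => ‖g s‖ₑ ^ p) ⋆ₗ expKernel |ω.re|) t :=
        lintegral_const_mul' _ _ (by finiteness)
    _ < ⊤ := ENNReal.mul_lt_top (by finiteness) <|
        setLIntegral_Ioi_lconvolution_expKernel_lt_top (abs_pos.2 hω)
          (hgc.aestronglyMeasurable.enorm.pow_const p) (enorm_rpow_le_of_norm_le hC (by linarith))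
          (by finiteness) hg0.2.ne

lemma LpR_Gop (hω : ω.re ≠ 0) (hp : 1 ≤ p) (hg : AEStronglyMeasurable g) (hg0 : LpR p g) :
    LpR p (Gop ω g) := by
  calc ∫⁻ t, ‖Gop ω g t‖ₑ ^ p
      ≤ ∫⁻ t, ENNReal.ofReal (2 / |ω.re|) ^ (p - 1) *
          ((fun s => ‖g s‖ₑ ^ p) ⋆ₗ expKernel |ω.re|) t :=
        lintegral_mono fun t => enorm_Gop_rpow_le hω hg hp t
    _ = ENNReal.ofReal (2 / |ω.re|) ^ (p - 1) *
          ((∫⁻ s, ‖g s‖ₑ ^ p) * ENNReal.ofReal (2 / |ω.re|)) := by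
        rw [lintegral_const_mul' _ _ (by finiteness), lintegral_lconvolution
          (hg.enorm.pow_const p) (by fun_prop), lintegral_expKernel (abs_pos.2 hω)]
    _ < ⊤ := by
        have : ∫⁻ s, ‖g s‖ₑ ^ p ≠ ⊤ := hg0.ne
        finiteness

lemma Lp0_of_LpR (hg : BCb g) (hg0 : LpR p g) : Lp0 p g :=
  let ⟨_, C, hC⟩ := hg
  ⟨⟨C, fun t _ => hC t⟩, (setLIntegral_le_lintegral _ _).trans_lt hg0⟩

lemma tendsto_Gop_atTop (hω : ω.re ≠ 0) (hp : 1 ≤ p) (hg : BCb g) (hg0 : Lp0 p g) :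
    Tendsto (Gop ω g) atTop (𝓝 0) := by
  obtain ⟨hgc, C, hC⟩ := hg
  exact tendsto_Gop_of_tendsto_lconvolution hω hgc.aestronglyMeasurable hp <|
    tendsto_lconvolution_expKernel_atTop (abs_pos.2 hω)
      (hgc.aestronglyMeasurable.enorm.pow_const p) (enorm_rpow_le_of_norm_le hC (by linarith))
      (by finiteness) hg0.2.ne

lemma tendsto_Gop_atBot (hω : ω.re ≠ 0) (hp : 1 ≤ p) (hg : BCb g) (hg0 : LpR p g) :
    Tendsto (Gop ω g) atBot (𝓝 0) := by
  obtain ⟨hgc, C, hC⟩ := hg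
  exact tendsto_Gop_of_tendsto_lconvolution hω hgc.aestronglyMeasurable hp <|
    tendsto_lconvolution_expKernel_atBot (abs_pos.2 hω)
      (hgc.aestronglyMeasurable.enorm.pow_const p) (enorm_rpow_le_of_norm_le hC (by linarith))
      (by finiteness) hg0.ne

end Integrability

/-- `G_ω` maps `AP(p)` into `AP(p) ∩ AAP` and `AP₀(p)` into `AP₀(p) ∩ AAP₀`. -/
theorem stmt5 (ω : ℂ) (hω : ω.re ≠ 0) (p : ℝ) (hp : 1 ≤ p) (r : ℝ → ℂ) :
    (APp p r → APp p (Gop ω r) ∧ AAP (Gop ω r)) ∧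
    (APp0 p r → APp0 p (Gop ω r) ∧ AAP0 (Gop ω r)) := by
  have hdecomp : ∀ {φ g : ℝ → ℂ}, BCb r → (∀ t, r t = φ t + g t) → AP φ →
      BCb g ∧ ∀ t, Gop ω r t = Gop ω φ t + Gop ω g t := by
    intro φ g hr hsum hφ
    have hr_eq : r = φ + g := funext hsum
    have hg : BCb g := by simpa [hr_eq] using hr.sub hφ.bcb
    exact ⟨hg, fun t => by rw [hr_eq, Gop_add hω hφ.bcb hg, Pi.add_apply]⟩
  refine ⟨fun ⟨hr, φ, g, hsum, hφ, hg⟩ => ?_, fun ⟨hr, φ, g, hsum, hφ, hg⟩ => ?_⟩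
  · obtain ⟨hgb, hG⟩ := hdecomp hr hsum hφ
    exact ⟨⟨BCb_Gop hω hr, _, _, hG, AP_Gop hω hφ, Lp0_Gop hω hp hgb hg⟩,
      BCb_Gop hω hr, _, _, hG, AP_Gop hω hφ, tendsto_Gop_atTop hω hp hgb hg⟩
  · obtain ⟨hgb, hG⟩ := hdecomp hr hsum hφ
    exact ⟨⟨BCb_Gop hω hr, _, _, hG, AP_Gop hω hφ, LpR_Gop hω hp hgb.1.aestronglyMeasurable hg⟩,
      BCb_Gop hω hr, _, _, hG, AP_Gop hω hφ, tendsto_Gop_atTop hω hp hgb (Lp0_of_LpR hgb hg),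
      tendsto_Gop_atBot hω hp hgb hg⟩

end
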